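/- Let A⁰, A¹, …, A^K, A* be nonempty finite sets and w₁, …, w_K nonnegative reals summing to 1. Define F̂(A⁰) = Σₖ wₖ F(A⁰; Aᵏ) and F(A⁰) = F(A⁰; A*), where F(A; B) = 2|A ∩ B|/(|A| + |B|). Then |F̂(A⁰) − F(A⁰)| ≤ 3 Σₖ wₖ |Aᵏ ∆ A*|/|A*|. -/

import Mathlib

/-!
Since the weights sum to one, `F̂(A⁰) - F(A⁰)` is the weighted average of the differences
`F(A⁰; Aᵏ) - F(A⁰; A*)`, so it suffices to show `|F(A⁰; B) - F(A⁰; C)| ≤ 3 |B ∆ C| / |C|`.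
Replacing `B` by `C` moves both `|A⁰ ∩ B|` and `|B|` by at most `|B ∆ C|`. The change in the
numerator costs at most `2 |B ∆ C| / |C|`, and, because `F(A⁰; B) ≤ 1`, the change in the
denominator costs at most `|B ∆ C| / |C|`.
-/

open scoped symmDiff

open Finset

lemma abs_two_mul_div_add_sub_two_mul_div_add_le {a b c x y d : ℝ} (ha : 0 ≤ a) (hb : 0 ≤ b)
    (hc : 0 < c) (hx : 0 ≤ x) (hxab : 2 * x ≤ a + b) (hxy : |x - y| ≤ d) (hbc : |b - c| ≤ d) :
    |2 * x / (a + b) - 2 * y / (a + c)| ≤ 3 * (d / c) := by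
  set p := 2 * x / (a + b)
  have hp : p * (a + b) = 2 * x := by
    rcases (add_nonneg ha hb).eq_or_lt with hab | hab
    · rw [← hab] at hxab ⊢; linarith
    · exact div_mul_cancel₀ _ hab.ne'
  have hp1 : |p| ≤ 1 := by
    rw [abs_of_nonneg (by positivity)]
    exact div_le_one_of_le₀ hxab (by positivity)
  have hac : 0 < a + c := by positivity
  have hsplit : p - 2 * y / (a + c) = (2 * (x - y) + p * (c - b)) / (a + c) := by
    field_simp
    linear_combination hp
  rw [hsplit, abs_div, abs_of_pos hac, div_le_iff₀ hac]
  rw [abs_sub_comm] at hbc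
  calc |2 * (x - y) + p * (c - b)| ≤ 2 * d + 1 * d := by
        refine (abs_add_le _ _).trans (add_le_add ?_ ?_)
        · rw [abs_mul, abs_two]; gcongr
        · rw [abs_mul]; exact mul_le_mul hp1 hbc (abs_nonneg _) zero_le_one
    _ = 3 * (d / c) * c := by field_simp; ring
    _ ≤ 3 * (d / c) * (a + c) := by
        have : 0 ≤ d := (abs_nonneg _).trans hxy
        gcongr; linarith

lemma abs_sum_mul_sub_le_sum_mul_abs_sub {ι : Type*} (s : Finset ι) {w f : ι → ℝ} (c : ℝ)
    (hw : ∀ i ∈ s, 0 ≤ w i) (hw1 : ∑ i ∈ s, w i = 1) :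
    |∑ i ∈ s, w i * f i - c| ≤ ∑ i ∈ s, w i * |f i - c| := by
  have hc : c = ∑ i ∈ s, w i * c := by rw [← sum_mul, hw1, one_mul]
  rw [hc, ← sum_sub_distrib, ← hc]
  refine (abs_sum_le_sum_abs _ _).trans (sum_le_sum fun i hi => ?_)
  rw [← mul_sub, abs_mul, abs_of_nonneg (hw i hi)]

namespace Finset

variable {α : Type*} [DecidableEq α]

lemma card_symmDiff (s t : Finset α) : #(s ∆ t) = #(s \ t) + #(t \ s) :=
  card_union_of_disjoint disjoint_sdiff_sdiff

lemma abs_card_sub_card_le_card_symmDiff (s t : Finset α) :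
    |(#s : ℝ) - #t| ≤ #(s ∆ t) := by
  have hs := card_sdiff_add_card_inter s t
  have ht := card_sdiff_add_card_inter t s
  rw [inter_comm] at ht
  rw [card_symmDiff, abs_sub_le_iff]
  constructor <;> push_cast [← hs, ← ht] <;> linarith [(#(s \ t)).cast_nonneg (α := ℝ),
    (#(t \ s)).cast_nonneg (α := ℝ)]

lemma abs_card_inter_sub_card_inter_le (s t u : Finset α) :
    |(#(s ∩ t) : ℝ) - #(s ∩ u)| ≤ #(t ∆ u) := by
  refine (abs_card_sub_card_le_card_symmDiff _ _).trans ?_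
  rw [← inf_eq_inter, ← inf_eq_inter, ← inf_symmDiff_distrib_left]
  exact_mod_cast card_le_card inter_subset_right

/-- The Sørensen–Dice coefficient `F(s; t)`. -/
noncomputable def dice (s t : Finset α) : ℝ := 2 * #(s ∩ t) / (#s + #t)

lemma abs_dice_sub_dice_le (s t u : Finset α) (hu : u.Nonempty) :
    |dice s t - dice s u| ≤ 3 * (#(t ∆ u) / #u) := by
  refine abs_two_mul_div_add_sub_two_mul_div_add_le (by positivity) (by positivity)
    (by exact_mod_cast hu.card_pos) (by positivity) ?_ (abs_card_inter_sub_card_inter_le s t u)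
    (abs_card_sub_card_le_card_symmDiff t u)
  rw [two_mul]
  exact_mod_cast add_le_add (card_le_card inter_subset_left) (card_le_card inter_subset_right)

end Finset

theorem Fhat_diff_bound_general {α : Type*} [DecidableEq α] {K : ℕ}
    (A0 As : Finset α) (A : Fin K → Finset α)
    (hs : As.Nonempty)
    (w : Fin K → ℝ) (hw : ∀ k, 0 ≤ w k) (hw1 : ∑ k, w k = 1) :
    |(∑ k, w k * (2 * ((A0 ∩ A k).card : ℝ) / ((A0.card : ℝ) + ((A k).card : ℝ)))) -
      2 * ((A0 ∩ As).card : ℝ) / ((A0.card : ℝ) + (As.card : ℝ))| ≤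
      3 * ∑ k, w k * (((A k ∆ As).card : ℝ) / (As.card : ℝ)) := by
  change |∑ k, w k * dice A0 (A k) - dice A0 As| ≤ _
  calc |∑ k, w k * dice A0 (A k) - dice A0 As|
      ≤ ∑ k, w k * |dice A0 (A k) - dice A0 As| :=
        abs_sum_mul_sub_le_sum_mul_abs_sub _ _ (fun k _ => hw k) hw1
    _ ≤ ∑ k, w k * (3 * (#(A k ∆ As) / #As)) := by
        gcongr with k
        exacts [hw k, abs_dice_sub_dice_le A0 (A k) As hs]
    _ = 3 * ∑ k, w k * (#(A k ∆ As) / #As) := by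
        rw [mul_sum]; simp only [mul_left_comm]

theorem Fhat_diff_bound {α : Type*} [DecidableEq α] {K : ℕ}
    (A0 As : Finset α) (A : Fin K → Finset α)
    (h0 : A0.Nonempty) (hs : As.Nonempty) (hA : ∀ k, (A k).Nonempty)
    (w : Fin K → ℝ) (hw : ∀ k, 0 ≤ w k) (hw1 : ∑ k, w k = 1) :
    |(∑ k, w k * (2 * ((A0 ∩ A k).card : ℝ) / ((A0.card : ℝ) + ((A k).card : ℝ)))) -
      2 * ((A0 ∩ As).card : ℝ) / ((A0.card : ℝ) + (As.card : ℝ))| ≤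
      3 * ∑ k, w k * (((A k ∆ As).card : ℝ) / (As.card : ℝ)) :=
  Fhat_diff_bound_general A0 As A hs w hw hw1
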